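/- arXiv:0803.1736 — 3 statements merged into one kernel-verified Lean document; each statement's English description precedes it below -/
import Mathlib

section
/- Let ρ: ℝ → ℝ≥0 be even, nondecreasing on [0,∞), continuous at 0 with ρ(0)=0, and bounded with sup ρ = a. For a probability measure F on ℝ define S(F) = inf{s > 0 : E_F[ρ(x/s)] < b} for some fixed 0 < b < a. Then for every K > 0 and every C > b/a there exists K' > 0 such that for any probability measure F with P_F(|x| > K') > C one has S(F) > K. -/
/-!
Choose `u₀ > 0` with `ρ u₀ > b / C`, possible since `b / C < a = sup ρ`, and put `K' = 2 K u₀`.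
For `s < 2K` every `x` with `|x| > K'` has `|x / s| > u₀`, so Markov's inequality gives
`E_F[ρ(x/s)] ≥ ρ u₀ · P_F(|x| > K') > (b / C) · C = b`. Hence no `s < 2K` lies in the set defining
`S(F)`; that set is nonempty because `E_F[ρ(x/s)] → ρ 0 = 0` as `s → ∞` by dominated convergence,
so `S(F) ≥ 2K > K`.
-/

open MeasureTheory Filter Set

/-- The M-scale functional `S(F) = inf {s > 0 : E_F[ρ(x/s)] < b}`. -/
noncomputable def Mscale (ρ : ℝ → ℝ) (b : ℝ) (F : Measure ℝ) : ℝ :=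
  sInf {s : ℝ | 0 < s ∧ ∫ x, ρ (x / s) ∂F < b}

open Topology

section RhoFunction

variable {ρ : ℝ → ℝ}

theorem rho_abs (heven : ∀ u, ρ (-u) = ρ u) (u : ℝ) : ρ |u| = ρ u := by
  rcases abs_choice u with h | h <;> simp only [h, heven]

theorem rho_le_rho_of_abs_le (heven : ∀ u, ρ (-u) = ρ u) (hmono : MonotoneOn ρ (Ici 0))
    {u v : ℝ} (h : |u| ≤ |v|) : ρ u ≤ ρ v := by
  rw [← rho_abs heven u, ← rho_abs heven v]
  exact hmono (abs_nonneg u) (abs_nonneg v) h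

theorem rho_nonneg (hρ0 : ρ 0 = 0) (heven : ∀ u, ρ (-u) = ρ u) (hmono : MonotoneOn ρ (Ici 0))
    (u : ℝ) : 0 ≤ ρ u :=
  hρ0 ▸ rho_le_rho_of_abs_le heven hmono (by simp)

theorem measurable_of_even_of_monotoneOn (heven : ∀ u, ρ (-u) = ρ u)
    (hmono : MonotoneOn ρ (Ici 0)) : Measurable ρ := by
  have hpos : Monotone fun t => ρ (max t 0) := fun x y hxy =>
    hmono (le_max_right x 0) (le_max_right y 0) (max_le_max_right 0 hxy)
  convert hpos.measurable.comp measurable_abs using 1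
  funext u
  simp only [Function.comp_apply, max_eq_left (abs_nonneg u), rho_abs heven]

theorem exists_pos_lt_rho (hρ0 : ρ 0 = 0) (heven : ∀ u, ρ (-u) = ρ u) {a c : ℝ}
    (hsup : IsLUB (range ρ) a) (hc : 0 ≤ c) (hca : c < a) : ∃ u, 0 < u ∧ c < ρ u := by
  obtain ⟨_, ⟨u, rfl⟩, hcu, -⟩ := hsup.exists_between hca
  refine ⟨|u|, abs_pos.2 fun hu => ?_, (rho_abs heven u).symm ▸ hcu⟩
  rw [hu, hρ0] at hcu
  exact hcu.not_ge hc

variable {F : Measure ℝ} {M : ℝ}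

theorem integrable_comp_div [IsFiniteMeasure F] (hmeas : Measurable ρ) (hbdd : ∀ u, ‖ρ u‖ ≤ M)
    (s : ℝ) : Integrable (fun x => ρ (x / s)) F :=
  .of_bound (hmeas.comp (measurable_id.div_const s)).aestronglyMeasurable M
    (ae_of_all _ fun _ => hbdd _)

theorem tendsto_integral_comp_div_atTop [IsFiniteMeasure F] (hρ0 : ρ 0 = 0)
    (hcont : ContinuousAt ρ 0) (hmeas : Measurable ρ) (hbdd : ∀ u, ‖ρ u‖ ≤ M) :
    Tendsto (fun s => ∫ x, ρ (x / s) ∂F) atTop (𝓝 0) := by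
  have hlim : ∀ x : ℝ, Tendsto (fun s => ρ (x / s)) atTop (𝓝 0) := fun x =>
    hρ0 ▸ hcont.tendsto.comp (tendsto_const_nhds.div_atTop tendsto_id)
  simpa using tendsto_integral_filter_of_dominated_convergence (fun _ => M)
    (.of_forall fun s => (integrable_comp_div hmeas hbdd s).aestronglyMeasurable)
    (.of_forall fun _ => ae_of_all _ fun _ => hbdd _) (integrable_const M) (ae_of_all _ hlim)

theorem mscale_set_nonempty [IsFiniteMeasure F] {b : ℝ} (hb : 0 < b) (hρ0 : ρ 0 = 0)
    (hcont : ContinuousAt ρ 0) (hmeas : Measurable ρ) (hbdd : ∀ u, ‖ρ u‖ ≤ M) :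
    {s : ℝ | 0 < s ∧ ∫ x, ρ (x / s) ∂F < b}.Nonempty :=
  ((eventually_gt_atTop 0).and
    ((tendsto_integral_comp_div_atTop hρ0 hcont hmeas hbdd).eventually (eventually_lt_nhds hb))).exists

theorem le_mscale_of_forall_lt {b K : ℝ} (hne : {s : ℝ | 0 < s ∧ ∫ x, ρ (x / s) ∂F < b}.Nonempty)
    (h : ∀ s, 0 < s → s < K → b ≤ ∫ x, ρ (x / s) ∂F) : K ≤ Mscale ρ b F :=
  le_csInf hne fun s ⟨hs, hint⟩ => not_lt.1 fun hsK => (h s hs hsK).not_gt hint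

theorem mul_measureReal_tail_le_integral_comp_div [IsFiniteMeasure F] (hρ0 : ρ 0 = 0)
    (heven : ∀ u, ρ (-u) = ρ u) (hmono : MonotoneOn ρ (Ici 0)) (hbdd : ∀ u, ‖ρ u‖ ≤ M)
    {s t u : ℝ} (hs : 0 < s) (hu : 0 ≤ u) (ht : s * u ≤ t) :
    ρ u * F.real {x | t < |x|} ≤ ∫ x, ρ (x / s) ∂F := by
  have hnonneg := rho_nonneg hρ0 heven hmono
  have htail : {x | t < |x|} ⊆ {x | ρ u ≤ ρ (x / s)} := fun x (hx : t < |x|) =>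
    rho_le_rho_of_abs_le heven hmono <| by
      rw [abs_div, abs_of_pos hs, abs_of_nonneg hu, le_div_iff₀ hs]
      linarith [hx.le]
  calc ρ u * F.real {x | t < |x|} ≤ ρ u * F.real {x | ρ u ≤ ρ (x / s)} :=
        mul_le_mul_of_nonneg_left (measureReal_mono htail) (hnonneg u)
    _ ≤ ∫ x, ρ (x / s) ∂F :=
        mul_meas_ge_le_integral_of_nonneg (ae_of_all _ fun _ => hnonneg _)
          (integrable_comp_div (measurable_of_even_of_monotoneOn heven hmono) hbdd s) _

end RhoFunction

theorem mscale_large_of_tail_mass_general (ρ : ℝ → ℝ) (a b : ℝ)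
    (hρ0 : ρ 0 = 0) (hcont : ContinuousAt ρ 0)
    (heven : ∀ u, ρ (-u) = ρ u) (hmono : MonotoneOn ρ (Set.Ici 0))
    (hsup : IsLUB (Set.range ρ) a) (hb : 0 < b) (hba : b < a) :
    ∀ K > (0:ℝ), ∀ C > b / a, ∃ K' > (0:ℝ), ∀ F : Measure ℝ, IsProbabilityMeasure F →
      C < (F {x : ℝ | K' < |x|}).toReal → K < Mscale ρ b F := by
  intro K hK C hC
  have ha : 0 < a := hb.trans hba
  have hC0 : 0 < C := (div_pos hb ha).trans hC
  obtain ⟨u₀, hu₀, hρu₀⟩ := exists_pos_lt_rho hρ0 heven hsup (div_pos hb hC0).le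
    ((div_lt_iff₀' hC0).2 ((div_lt_iff₀ ha).1 hC))
  refine ⟨2 * K * u₀, by positivity, fun F _ htail => ?_⟩
  have hbdd : ∀ u, ‖ρ u‖ ≤ a := fun u => by
    rw [Real.norm_of_nonneg (rho_nonneg hρ0 heven hmono u)]
    exact hsup.1 ⟨u, rfl⟩
  suffices 2 * K ≤ Mscale ρ b F by linarith
  refine le_mscale_of_forall_lt (mscale_set_nonempty hb hρ0 hcont
    (measurable_of_even_of_monotoneOn heven hmono) hbdd) fun s hs hsK => ?_
  calc b = b / C * C := (div_mul_cancel₀ b hC0.ne').symm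
    _ ≤ ρ u₀ * F.real {x | 2 * K * u₀ < |x|} :=
        mul_le_mul hρu₀.le htail.le hC0.le (rho_nonneg hρ0 heven hmono u₀)
    _ ≤ ∫ x, ρ (x / s) ∂F :=
        mul_measureReal_tail_le_integral_comp_div hρ0 heven hmono hbdd hs hu₀.le
          (by nlinarith)

/-- Lemma A.1(a): if `F` puts mass more than `C > b/a` outside `[-K', K']` for suitable `K'`,
then the M-scale exceeds `K`. -/
theorem mscale_large_of_tail_mass (ρ : ℝ → ℝ) (a b : ℝ)
    (hnonneg : ∀ u, 0 ≤ ρ u) (hρ0 : ρ 0 = 0) (hcont : ContinuousAt ρ 0)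
    (heven : ∀ u, ρ (-u) = ρ u) (hmono : MonotoneOn ρ (Set.Ici 0))
    (hsup : IsLUB (Set.range ρ) a) (hb : 0 < b) (hba : b < a) :
    ∀ K > (0:ℝ), ∀ C > b / a, ∃ K' > (0:ℝ), ∀ F : Measure ℝ, IsProbabilityMeasure F →
      C < (F {x : ℝ | K' < |x|}).toReal → K < Mscale ρ b F :=
  mscale_large_of_tail_mass_general ρ a b hρ0 hcont heven hmono hsup hb hba
end

section
/- Let ρ: ℝ → ℝ≥0 be even, nondecreasing on [0,∞), continuous at 0 with ρ(0)=0, and bounded with sup ρ = a. Define S(F)=inf{s>0 : E_F[ρ(x/s)]<b} for fixed 0<b<a. Then for every M > 0 and every C < b/a there exists M' > 0 such that for any probability measure F with P_F(|x| > M) < C one has S(F) < M'. -/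
/-!
Since `ρ` is continuous at `0` with `ρ 0 = 0`, a scale `s` can be chosen so large that
`ρ (M / s) < b - C a`. Splitting the expectation at `|x| = M` gives
`E_F ρ(x/s) ≤ ρ (M / s) + a P_F(|x| > M) < b` for every admissible `F`, so `S(F) ≤ s`.
-/

open MeasureTheory Filter Set

open Topology

theorem exists_pos_lt_of_continuousAt_zero {ρ : ℝ → ℝ} (hρ0 : ρ 0 = 0)
    (hcont : ContinuousAt ρ 0) (M : ℝ) {ε : ℝ} (hε : 0 < ε) :
    ∃ s > 0, ρ (M / s) < ε := by
  have hlim : Tendsto (fun s => ρ (M / s)) atTop (𝓝 0) := by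
    rw [← hρ0]
    exact hcont.tendsto.comp (tendsto_const_nhds.div_atTop tendsto_id)
  exact ((eventually_gt_atTop 0).and (hlim.eventually (gt_mem_nhds hε))).exists

theorem le_of_abs_le_of_even_of_monotoneOn {ρ : ℝ → ℝ} (heven : ∀ u, ρ (-u) = ρ u)
    (hmono : MonotoneOn ρ (Ici 0)) {u v : ℝ} (huv : |u| ≤ v) : ρ u ≤ ρ v := by
  have habs : ρ |u| = ρ u := by
    rcases abs_choice u with h | h <;> rw [h]
    exact heven u
  rw [← habs]
  exact hmono (abs_nonneg u) ((abs_nonneg u).trans huv) huv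

theorem le_add_indicator_abs_gt {ρ : ℝ → ℝ} {a : ℝ} (hnonneg : ∀ u, 0 ≤ ρ u)
    (heven : ∀ u, ρ (-u) = ρ u) (hmono : MonotoneOn ρ (Ici 0)) (hle : ∀ u, ρ u ≤ a)
    {s : ℝ} (hs : 0 < s) (M x : ℝ) :
    ρ (x / s) ≤ ρ (M / s) + {x : ℝ | M < |x|}.indicator (fun _ => a) x := by
  by_cases hx : x ∈ {x : ℝ | M < |x|}
  · rw [indicator_of_mem hx]
    linarith [hle (x / s), hnonneg (M / s)]
  · rw [indicator_of_notMem hx, add_zero]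
    apply le_of_abs_le_of_even_of_monotoneOn heven hmono
    rw [abs_div, abs_of_pos hs]
    exact div_le_div_of_nonneg_right (not_lt.1 hx) hs.le

theorem integral_le_add_mul_measure_abs_gt {ρ : ℝ → ℝ} {a : ℝ} (hnonneg : ∀ u, 0 ≤ ρ u)
    (heven : ∀ u, ρ (-u) = ρ u) (hmono : MonotoneOn ρ (Ici 0)) (hle : ∀ u, ρ u ≤ a)
    {s : ℝ} (hs : 0 < s) (M : ℝ) (F : Measure ℝ) [IsProbabilityMeasure F] :
    ∫ x, ρ (x / s) ∂F ≤ ρ (M / s) + a * (F {x : ℝ | M < |x|}).toReal := by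
  have hT : MeasurableSet {x : ℝ | M < |x|} :=
    measurableSet_lt measurable_const continuous_abs.measurable
  have hdom : Integrable (fun x => ρ (M / s) + {x : ℝ | M < |x|}.indicator (fun _ => a) x) F :=
    (integrable_const _).add ((integrable_const a).indicator hT)
  calc ∫ x, ρ (x / s) ∂F
      ≤ ∫ x, (ρ (M / s) + {x : ℝ | M < |x|}.indicator (fun _ => a) x) ∂F :=
        integral_mono_of_nonneg (.of_forall fun _ => hnonneg _) hdom
          (.of_forall (le_add_indicator_abs_gt hnonneg heven hmono hle hs M))
    _ = ρ (M / s) + a * (F {x : ℝ | M < |x|}).toReal := by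
        rw [integral_add (integrable_const _) ((integrable_const a).indicator hT),
          integral_const, integral_indicator_const _ hT, probReal_univ, one_smul, smul_eq_mul,
          mul_comm, Measure.real]

theorem mscale_le_of_integral_lt {ρ : ℝ → ℝ} {b s : ℝ} {F : Measure ℝ} (hs : 0 < s)
    (hint : ∫ x, ρ (x / s) ∂F < b) : Mscale ρ b F ≤ s :=
  csInf_le ⟨0, fun _ hx => hx.1.le⟩ ⟨hs, hint⟩

/-- Lemma A.1(b): if `F` puts mass less than `C < b/a` outside `[-M, M]`,
then the M-scale is bounded by some `M'` depending only on `M` and `C`. -/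
theorem mscale_bounded_of_small_tail (ρ : ℝ → ℝ) (a b : ℝ)
    (hnonneg : ∀ u, 0 ≤ ρ u) (hρ0 : ρ 0 = 0) (hcont : ContinuousAt ρ 0)
    (heven : ∀ u, ρ (-u) = ρ u) (hmono : MonotoneOn ρ (Set.Ici 0))
    (hsup : IsLUB (Set.range ρ) a) (hb : 0 < b) (hba : b < a) :
    ∀ M > (0:ℝ), ∀ C < b / a, ∃ M' > (0:ℝ), ∀ F : Measure ℝ, IsProbabilityMeasure F →
      (F {x : ℝ | M < |x|}).toReal < C → Mscale ρ b F < M' := by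
  intro M _ C hC
  have ha : 0 < a := hb.trans hba
  have hCa : C * a < b := (lt_div_iff₀ ha).1 hC
  obtain ⟨s, hs, hρs⟩ := exists_pos_lt_of_continuousAt_zero hρ0 hcont M (sub_pos.2 hCa)
  refine ⟨s + 1, by linarith, fun F _ htail => ?_⟩
  have hint : ∫ x, ρ (x / s) ∂F < b := calc
    ∫ x, ρ (x / s) ∂F ≤ ρ (M / s) + a * (F {x : ℝ | M < |x|}).toReal :=
      integral_le_add_mul_measure_abs_gt hnonneg heven hmono (fun u => hsup.1 ⟨u, rfl⟩) hs M F
    _ < b := by linarith [mul_lt_mul_of_pos_left htail ha]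
  linarith [mscale_le_of_integral_lt hs hint]
end

section
/- Let F, G: ℝ → [0,1] be distribution functions, and let a ∈ ℝ. Then for all b ≤ a with G(a) < 1 and F(a) < 1, one has |(G(a)-G(b))/(1-G(b)) - (F(a)-F(b))/(1-F(b))| ≤ 4·sup_{t∈ℝ}|G(t)-F(t)| / ((1-G(a))(1-F(a))). -/
/-!
Since `(F a - F b) / (1 - F b) = 1 - (1 - F a) / (1 - F b)`, the difference of the conditional
probabilities is a difference of two ratios of survival values. Two ratios `s' / s` and `t' / t`
with `0 ≤ t' ≤ t` differ by at most `(|s' - t'| + |s - t|) / s`, because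
`s' / s - t' / t = ((s' - t') + (t' / t) (t - s)) / s` and `t' / t ≤ 1`. Both numerator terms are
at most the Kolmogorov distance `D`, giving even `2 D / (1 - F a)`.
-/

open Set

lemma sub_div_one_sub {𝕜 : Type*} [Field 𝕜] (x y : 𝕜) (hy : y ≠ 1) :
    (x - y) / (1 - y) = 1 - (1 - x) / (1 - y) := by
  rw [one_sub_div (sub_ne_zero.mpr hy.symm)]
  ring_nf

lemma abs_div_sub_div_le {𝕜 : Type*} [Field 𝕜] [LinearOrder 𝕜] [IsStrictOrderedRing 𝕜]
    {s s' t t' : 𝕜} (hs : 0 < s) (ht : 0 < t) (ht' : 0 ≤ t') (ht't : t' ≤ t) :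
    |s' / s - t' / t| ≤ (|s' - t'| + |s - t|) / s := by
  have hsplit : s' / s - t' / t = ((s' - t') + t' / t * (t - s)) / s := by
    field_simp
    ring
  rw [hsplit, abs_div, abs_of_pos hs]
  gcongr
  calc |s' - t' + t' / t * (t - s)| ≤ |s' - t'| + |t' / t * (t - s)| := abs_add_le _ _
    _ = |s' - t'| + t' / t * |t - s| := by
        rw [abs_mul, abs_of_nonneg (div_nonneg ht' ht.le)]
    _ ≤ |s' - t'| + |s - t| := by
        rw [abs_sub_comm t s]
        gcongr
        exact mul_le_of_le_one_left (abs_nonneg _) (div_le_one_of_le₀ ht't ht.le)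

lemma abs_sub_le_iSup_abs_sub {α : Type*} {f g : α → ℝ} (hf : ∀ t, f t ∈ Icc (0 : ℝ) 1)
    (hg : ∀ t, g t ∈ Icc (0 : ℝ) 1) (t : α) : |g t - f t| ≤ ⨆ s, |g s - f s| :=
  le_ciSup ⟨(1 : ℝ), by
    rintro _ ⟨s, rfl⟩
    exact abs_sub_le_of_nonneg_of_le (hg s).1 (hg s).2 (hf s).1 (hf s).2⟩ t

/-- Inequality (A.3): the difference of conditional tail probabilities under two distribution
functions is controlled by their Kolmogorov distance. -/
theorem cond_tail_prob_diff_le (F G : ℝ → ℝ) (a : ℝ)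
    (hF : Monotone F) (hG : Monotone G)
    (hF01 : ∀ t, F t ∈ Set.Icc (0:ℝ) 1) (hG01 : ∀ t, G t ∈ Set.Icc (0:ℝ) 1)
    (hFa : F a < 1) (hGa : G a < 1) :
    ∀ b ≤ a,
      |(G a - G b) / (1 - G b) - (F a - F b) / (1 - F b)| ≤
        4 * (⨆ t : ℝ, |G t - F t|) / ((1 - G a) * (1 - F a)) := by
  intro b hb
  set D := ⨆ t : ℝ, |G t - F t|
  have hDa : |G a - F a| ≤ D := abs_sub_le_iSup_abs_sub hF01 hG01 a
  have hDb : |G b - F b| ≤ D := abs_sub_le_iSup_abs_sub hF01 hG01 b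
  have hFab : 1 - F a ≤ 1 - F b := sub_le_sub_left (hF hb) 1
  have hGab : 1 - G a ≤ 1 - G b := sub_le_sub_left (hG hb) 1
  have hFa' : 0 < 1 - F a := sub_pos.mpr hFa
  have hGa' : 0 < 1 - G a := sub_pos.mpr hGa
  have hD : 0 ≤ D := (abs_nonneg _).trans hDa
  rw [sub_div_one_sub _ _ ((hG hb).trans_lt hGa).ne, sub_div_one_sub _ _ ((hF hb).trans_lt hFa).ne,
    sub_sub_sub_cancel_left]
  calc |(1 - F a) / (1 - F b) - (1 - G a) / (1 - G b)|
      ≤ (|(1 - F a) - (1 - G a)| + |(1 - F b) - (1 - G b)|) / (1 - F b) :=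
        abs_div_sub_div_le (hFa'.trans_le hFab) (hGa'.trans_le hGab) hGa'.le hGab
    _ ≤ 2 * D / (1 - F a) := by
        rw [sub_sub_sub_cancel_left, sub_sub_sub_cancel_left]
        gcongr
        linarith
    _ ≤ 4 * D / ((1 - G a) * (1 - F a)) := by
        rw [div_le_div_iff₀ hFa' (mul_pos hGa' hFa')]
        nlinarith [mul_nonneg (mul_nonneg hD hFa'.le) (add_nonneg (hG01 a).1 zero_le_one)]
end
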